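/- Verification of the LRD divergence condition for separable covariances. Suppose C(z,τ) = C_S(z) · C_T(τ) with C_T(τ) = L(τ)/τ^α for τ > 0, where α ∈ (0,1), L : (0,∞) → (0,∞) is measurable, locally bounded and slowly varying at infinity, and C_S : [0,∞) → [0,∞) is continuous with C_S(0) = 1. Let K ⊂ ℝ^d be a convex body and P₁, P₂ independent uniform random points in K. Then Condition 2(ii) holds for m = 1 whenever α ∈ (0,1), and for m = 2 whenever α ∈ (0,1/2); that is, in each case there exists δ ∈ (0,1) such that T^{−δ} ∫₀^T (1−τ/T) E[C(‖P₁−P₂‖,τ)^m] dτ → ∞ as T → ∞. -/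

import Mathlib

open MeasureTheory ProbabilityTheory Filter Topology

noncomputable section

variable {d : ℕ}

/-- The joint law of two independent random points, each uniformly distributed in `K`. -/
def unifPair (K : Set (EuclideanSpace ℝ (Fin d))) :
    Measure (EuclideanSpace ℝ (Fin d) × EuclideanSpace ℝ (Fin d)) :=
  (volume (K ×ˢ K))⁻¹ • volume.restrict (K ×ˢ K)

/-- **Condition 2(ii)** for an integer `m ≥ 1` and a covariance function `C`: there exists
`δ ∈ (0,1)` such that `T^{−δ} ∫₀^T (1−τ/T) E[C(‖P₁−P₂‖,τ)^m] dτ → ∞` as `T → ∞`, where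
`P₁, P₂` are independent uniform random points in `K`. -/
def Cond2ii (C : ℝ → ℝ → ℝ) (K : Set (EuclideanSpace ℝ (Fin d))) (m : ℕ) : Prop :=
  ∃ δ ∈ Set.Ioo (0:ℝ) 1,
    Tendsto (fun T : ℝ => T ^ (-δ) *
        ∫ τ in (0:ℝ)..T, (1 - τ / T) * ∫ p, C ‖p.1 - p.2‖ τ ^ m ∂(unifPair K))
      atTop atTop

/-!
Slow variation gives `f (2t) / f t → 2^{-mα}` for the integrand `f τ = (L τ / τ^α)^m`, so for
any `γ < 1 - mα` we have `f (2σ) ≥ 2^{γ-1} f σ` from some `σ₀` on. The substitution `τ = 2σ`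
turns this into `∫_{2S}^{4S} f ≥ 2^γ ∫_S^{2S} f`; working with integrals over dyadic blocks
rather than with values of `L` is what lets pointwise slow variation suffice. Iterating gives
`∫_0^T f ≳ T^γ`, and since the weight `1 - τ/T` is at least `1/2` on `[0, T/2]`,
`T^{-δ} ∫_0^T (1 - τ/T) f ≳ T^{γ-δ} → ∞` for `δ < γ`. The spatial factor
`E[C_S(‖P₁ - P₂‖)^m]` is a positive constant, as `C_S^m` is continuous and positive at `0` and
`K` has interior points.
-/

open Real Set

section Doubling

variable {f : ℝ → ℝ}

lemma intervalIntegrable_of_forall_integrableOn_Ioc {x₀ : ℝ}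
    (hf : ∀ b, IntegrableOn f (Ioc x₀ b)) {a b : ℝ} (ha : x₀ ≤ a) (hb : x₀ ≤ b) :
    IntervalIntegrable f volume a b :=
  ⟨(hf b).mono_set (Ioc_subset_Ioc_left ha), (hf a).mono_set (Ioc_subset_Ioc_left hb)⟩

lemma mul_integral_le_integral_doubling {S c : ℝ} (hS : 0 ≤ S)
    (hf₁ : IntervalIntegrable f volume S (2 * S))
    (hf₂ : IntervalIntegrable f volume (2 * S) (2 * (2 * S)))
    (hc : ∀ σ ∈ Icc S (2 * S), c * f σ ≤ f (2 * σ)) :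
    2 * c * ∫ τ in S..2 * S, f τ ≤ ∫ τ in 2 * S..2 * (2 * S), f τ := by
  have hf_comp : IntervalIntegrable (fun σ => f (2 * σ)) volume S (2 * S) := by
    simpa using hf₂.comp_mul_left (c := 2)
  calc 2 * c * ∫ τ in S..2 * S, f τ = 2 * ∫ σ in S..2 * S, c * f σ := by
        rw [intervalIntegral.integral_const_mul]; ring
    _ ≤ 2 * ∫ σ in S..2 * S, f (2 * σ) := by
        gcongr
        exact intervalIntegral.integral_mono_on (by linarith) (hf₁.const_mul c) hf_comp hc
    _ = ∫ τ in 2 * S..2 * (2 * S), f τ := by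
        rw [intervalIntegral.integral_comp_mul_left f two_ne_zero, smul_eq_mul,
          mul_inv_cancel_left₀ two_ne_zero]

lemma pow_mul_integral_le_integral_dyadic {σ₀ c : ℝ} (hσ₀ : 0 ≤ σ₀) (hc : 0 ≤ c)
    (hf : ∀ b, IntegrableOn f (Ioc σ₀ b)) (hratio : ∀ σ ≥ σ₀, c * f σ ≤ f (2 * σ)) (n : ℕ) :
    (2 * c) ^ n * ∫ τ in σ₀..2 * σ₀, f τ ≤ ∫ τ in 2 ^ n * σ₀..2 * (2 ^ n * σ₀), f τ := by
  induction n with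
  | zero => simp
  | succ n ih =>
    have hS : σ₀ ≤ 2 ^ n * σ₀ := le_mul_of_one_le_left hσ₀ (one_le_pow₀ one_le_two)
    calc (2 * c) ^ (n + 1) * ∫ τ in σ₀..2 * σ₀, f τ
        = 2 * c * ((2 * c) ^ n * ∫ τ in σ₀..2 * σ₀, f τ) := by ring
      _ ≤ 2 * c * ∫ τ in 2 ^ n * σ₀..2 * (2 ^ n * σ₀), f τ := by gcongr
      _ ≤ ∫ τ in 2 * (2 ^ n * σ₀)..2 * (2 * (2 ^ n * σ₀)), f τ :=
        mul_integral_le_integral_doubling (hσ₀.trans hS)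
          (intervalIntegrable_of_forall_integrableOn_Ioc hf hS (by linarith))
          (intervalIntegrable_of_forall_integrableOn_Ioc hf (by linarith) (by linarith))
          fun σ hσ => hratio σ (hS.trans hσ.1)
      _ = ∫ τ in 2 ^ (n + 1) * σ₀..2 * (2 ^ (n + 1) * σ₀), f τ := by rw [pow_succ']; ring_nf

lemma div_rpow_mul_rpow_le_of_dyadic {g : ℝ → ℝ} {a b γ : ℝ} (ha : 0 < a) (hb : 0 ≤ b)
    (hγ : 0 ≤ γ) (hg : MonotoneOn g (Ici a)) (hdyadic : ∀ n : ℕ, b * (2 ^ γ) ^ n ≤ g (2 ^ n * a))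
    {T : ℝ} (hT : a ≤ T) :
    b / (2 * a) ^ γ * T ^ γ ≤ g T := by
  have hT0 : 0 ≤ T := ha.le.trans hT
  obtain ⟨n, hn_le, hn_lt⟩ := exists_nat_pow_near ((one_le_div ha).2 hT) one_lt_two
  have hT_le : T / (2 * a) ≤ 2 ^ n := by
    rw [div_le_iff₀ (by positivity)]; rw [div_lt_iff₀ ha, pow_succ] at hn_lt; linarith
  calc b / (2 * a) ^ γ * T ^ γ = b * (T / (2 * a)) ^ γ := by
        rw [div_rpow hT0 (by positivity)]; ring
    _ ≤ b * ((2 : ℝ) ^ n) ^ γ := by gcongr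
    _ = b * (2 ^ γ) ^ n := by
        rw [← rpow_natCast_mul zero_le_two, mul_comm (n : ℝ), rpow_mul_natCast zero_le_two]
    _ ≤ g (2 ^ n * a) := hdyadic n
    _ ≤ g T := hg (le_mul_of_one_le_left ha.le (one_le_pow₀ one_le_two)) hT
        ((le_div_iff₀ ha).1 hn_le)

lemma half_integral_le_integral_one_sub_div_mul {T : ℝ} (hT : 0 < T)
    (hf : IntervalIntegrable f volume 0 T) (hf_nonneg : ∀ τ ∈ Ioc 0 T, 0 ≤ f τ) :
    1 / 2 * ∫ τ in 0..T / 2, f τ ≤ ∫ τ in 0..T, (1 - τ / T) * f τ := by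
  have hw : IntervalIntegrable (fun τ => (1 - τ / T) * f τ) volume 0 T :=
    hf.continuousOn_mul (by fun_prop)
  have hsub : uIcc 0 (T / 2) ⊆ uIcc 0 T :=
    uIcc_subset_uIcc_left (mem_uIcc_of_le (by positivity) (by linarith))
  calc 1 / 2 * ∫ τ in 0..T / 2, f τ = ∫ τ in 0..T / 2, 1 / 2 * f τ :=
        (intervalIntegral.integral_const_mul _ _).symm
    _ ≤ ∫ τ in 0..T / 2, (1 - τ / T) * f τ := by
        refine intervalIntegral.integral_mono_on_of_le_Ioo (by positivity)
          ((hf.mono_set hsub).const_mul _) (hw.mono_set hsub) fun τ hτ => ?_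
        have : τ / T ≤ 1 / 2 := by rw [div_le_iff₀ hT]; linarith [hτ.2]
        exact mul_le_mul_of_nonneg_right (by linarith) (hf_nonneg τ ⟨hτ.1, by linarith [hτ.2]⟩)
    _ ≤ ∫ τ in 0..T, (1 - τ / T) * f τ := by
        refine intervalIntegral.integral_mono_interval le_rfl (by positivity) (by linarith) ?_ hw
        refine (ae_restrict_iff' measurableSet_Ioc).2 (ae_of_all _ fun τ hτ => ?_)
        have : τ / T ≤ 1 := (div_le_one hT).2 hτ.2
        exact mul_nonneg (by linarith) (hf_nonneg τ hτ)

lemma exists_mul_rpow_le_integral_of_tendsto_ratio {β γ : ℝ} (hγ : 0 ≤ γ) (hγβ : γ < 1 - β)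
    (hf : ∀ b, IntegrableOn f (Ioc 0 b)) (hf_pos : ∀ t, 0 < t → 0 < f t)
    (hratio : Tendsto (fun t => f (2 * t) / f t) atTop (𝓝 (2 ^ (-β)))) :
    ∃ a > 0, ∃ b > 0, ∀ T ≥ a, b * T ^ γ ≤ ∫ τ in 0..T, f τ := by
  have hc : (2 : ℝ) ^ (γ - 1) < 2 ^ (-β) := rpow_lt_rpow_of_exponent_lt one_lt_two (by linarith)
  obtain ⟨σ₁, hσ₁⟩ := eventually_atTop.1 (hratio.eventually (eventually_gt_nhds hc))
  set σ₀ := max σ₁ 1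
  have hσ₀ : 0 < σ₀ := zero_lt_one.trans_le (le_max_right _ _)
  have hdoubling : ∀ σ ≥ σ₀, 2 ^ (γ - 1) * f σ ≤ f (2 * σ) := fun σ hσ =>
    ((lt_div_iff₀ (hf_pos σ (hσ₀.trans_le hσ))).1 (hσ₁ σ ((le_max_left _ _).trans hσ))).le
  have hfσ₀ : ∀ b, IntegrableOn f (Ioc σ₀ b) := fun b =>
    (hf b).mono_set (Ioc_subset_Ioc_left hσ₀.le)
  have hf_nonneg : ∀ b, 0 ≤ᵐ[volume.restrict (Ioc 0 b)] f := fun b =>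
    (ae_restrict_iff' measurableSet_Ioc).2 (ae_of_all _ fun τ hτ => (hf_pos τ hτ.1).le)
  have hG_mono : MonotoneOn (fun T => ∫ τ in 0..T, f τ) (Ici (2 * σ₀)) := fun x hx y _ hxy =>
    intervalIntegral.integral_mono_interval le_rfl (by linarith [hx.out]) hxy (hf_nonneg y)
      (intervalIntegrable_of_forall_integrableOn_Ioc hf le_rfl (by linarith [hx.out]))
  have hD_pos : 0 < ∫ τ in σ₀..2 * σ₀, f τ :=
    intervalIntegral.intervalIntegral_pos_of_pos_on
      (intervalIntegrable_of_forall_integrableOn_Ioc hfσ₀ le_rfl (by linarith))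
      (fun τ hτ => hf_pos τ (hσ₀.trans hτ.1)) (by linarith)
  have hdyadic : ∀ n : ℕ, (∫ τ in σ₀..2 * σ₀, f τ) * (2 ^ γ) ^ n
      ≤ ∫ τ in 0..2 ^ n * (2 * σ₀), f τ := fun n => by
    have h2 : (2 : ℝ) * 2 ^ (γ - 1) = 2 ^ γ := by
      rw [rpow_sub two_pos, rpow_one]; field_simp
    have hS : (0 : ℝ) ≤ 2 ^ n * σ₀ := by positivity
    calc (∫ τ in σ₀..2 * σ₀, f τ) * (2 ^ γ) ^ n
        = (2 * 2 ^ (γ - 1)) ^ n * ∫ τ in σ₀..2 * σ₀, f τ := by rw [h2, mul_comm]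
      _ ≤ ∫ τ in 2 ^ n * σ₀..2 * (2 ^ n * σ₀), f τ :=
        pow_mul_integral_le_integral_dyadic hσ₀.le (by positivity) hfσ₀ hdoubling n
      _ ≤ ∫ τ in 0..2 * (2 ^ n * σ₀), f τ :=
        intervalIntegral.integral_mono_interval hS (by linarith) le_rfl (hf_nonneg _)
          (intervalIntegrable_of_forall_integrableOn_Ioc hf le_rfl (by positivity))
      _ = ∫ τ in 0..2 ^ n * (2 * σ₀), f τ := by rw [mul_left_comm]
  exact ⟨2 * σ₀, by positivity, _, by positivity, fun T hT =>
    div_rpow_mul_rpow_le_of_dyadic (by positivity) hD_pos.le hγ hG_mono hdyadic hT⟩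

lemma tendsto_rpow_neg_mul_integral_one_sub_div_mul_atTop {β δ : ℝ} (hδ₀ : 0 ≤ δ)
    (hδβ : δ < 1 - β) (hf : ∀ b, IntegrableOn f (Ioc 0 b)) (hf_pos : ∀ t, 0 < t → 0 < f t)
    (hratio : Tendsto (fun t => f (2 * t) / f t) atTop (𝓝 (2 ^ (-β)))) :
    Tendsto (fun T => T ^ (-δ) * ∫ τ in 0..T, (1 - τ / T) * f τ) atTop atTop := by
  obtain ⟨γ, hδγ, hγβ⟩ := exists_between hδβ
  obtain ⟨a, ha, b, hb, hG⟩ :=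
    exists_mul_rpow_le_integral_of_tendsto_ratio (hδ₀.trans hδγ.le) hγβ hf hf_pos hratio
  have hlim : Tendsto (fun T : ℝ => b / 2 * 2 ^ (-γ) * T ^ (γ - δ)) atTop atTop :=
    (tendsto_rpow_atTop (by linarith)).const_mul_atTop (by positivity)
  refine tendsto_atTop_mono' _ ?_ hlim
  filter_upwards [eventually_ge_atTop (2 * a)] with T hT
  have hT0 : 0 < T := by linarith
  calc b / 2 * 2 ^ (-γ) * T ^ (γ - δ) = T ^ (-δ) * (1 / 2 * (b * (T / 2) ^ γ)) := by
        rw [div_rpow hT0.le zero_le_two, rpow_sub hT0, rpow_neg zero_le_two, rpow_neg hT0.le]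
        ring
    _ ≤ T ^ (-δ) * (1 / 2 * ∫ τ in 0..T / 2, f τ) := by
        gcongr
        exact hG _ (by linarith)
    _ ≤ T ^ (-δ) * ∫ τ in 0..T, (1 - τ / T) * f τ := by
        gcongr
        exact half_integral_le_integral_one_sub_div_mul hT0
          (intervalIntegrable_of_forall_integrableOn_Ioc hf le_rfl hT0.le)
          fun τ hτ => (hf_pos τ hτ.1).le

end Doubling

lemma integrableOn_Ioc_div_rpow_pow {L : ℝ → ℝ} (hLmeas : Measurable L)
    (hLpos : ∀ t, 0 < t → 0 < L t)
    (hLbdd : ∀ b, 0 < b → ∃ M, ∀ t ∈ Ioc (0 : ℝ) b, L t ≤ M) {α : ℝ} {m : ℕ}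
    (hmα : (m : ℝ) * α < 1) (b : ℝ) :
    IntegrableOn (fun τ => (L τ / τ ^ α) ^ m) (Ioc 0 b) := by
  rcases le_or_gt b 0 with hb | hb
  · simp [Ioc_eq_empty_of_le hb]
  obtain ⟨M, hM⟩ := hLbdd b hb
  have hdom : IntegrableOn (fun τ : ℝ => max M 0 ^ m * τ ^ (-(m * α))) (Ioc 0 b) :=
    ((intervalIntegral.intervalIntegrable_rpow' (by linarith)).1).const_mul _
  refine hdom.mono' ((hLmeas.div (measurable_id.pow_const α)).pow_const m).aestronglyMeasurable
    ((ae_restrict_iff' measurableSet_Ioc).2 (ae_of_all _ ?_))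
  intro τ hτ
  have hL := hLpos τ hτ.1
  rw [norm_pow, Real.norm_of_nonneg (div_nonneg hL.le (rpow_nonneg hτ.1.le α)), div_pow,
    rpow_neg hτ.1.le, ← div_eq_mul_inv, mul_comm (m : ℝ), rpow_mul_natCast hτ.1.le]
  exact div_le_div_of_nonneg_right (pow_le_pow_left₀ hL.le ((hM τ hτ).trans (le_max_left _ _)) m)
    (pow_nonneg (rpow_nonneg hτ.1.le α) m)

lemma tendsto_div_rpow_pow_ratio {L : ℝ → ℝ} (hLpos : ∀ t, 0 < t → 0 < L t)
    (hLslow : Tendsto (fun t => L (2 * t) / L t) atTop (𝓝 1)) (α : ℝ) (m : ℕ) :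
    Tendsto (fun t => (L (2 * t) / (2 * t) ^ α) ^ m / (L t / t ^ α) ^ m) atTop
      (𝓝 (2 ^ (-(m * α)))) := by
  have hlim : ((1 : ℝ) * 2 ^ (-α)) ^ m = 2 ^ (-(m * α)) := by
    rw [one_mul, ← rpow_mul_natCast zero_le_two]; ring_nf
  refine hlim ▸ ((hLslow.mul_const _).pow m).congr' ?_
  filter_upwards [eventually_gt_atTop 0] with t ht
  have hLt := hLpos t ht
  rw [← div_pow, mul_rpow zero_le_two ht.le, rpow_neg zero_le_two]
  field_simp

lemma integral_unifPair_pos {K : Set (EuclideanSpace ℝ (Fin d))} (hKcomp : IsCompact K)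
    (hKint : (interior K).Nonempty) {g : ℝ → ℝ} (hg : Continuous g)
    (hg_nonneg : ∀ z, 0 ≤ z → 0 ≤ g z) (hg0 : 0 < g 0) :
    0 < ∫ p, g ‖p.1 - p.2‖ ∂(unifPair K) := by
  set F : EuclideanSpace ℝ (Fin d) × EuclideanSpace ℝ (Fin d) → ℝ := fun p => g ‖p.1 - p.2‖
  have hF : Continuous F := hg.comp (continuous_fst.sub continuous_snd).norm
  obtain ⟨x, hx⟩ := hKint
  have hpos : 0 < volume (Function.support F ∩ interior K ×ˢ interior K) :=
    ((hF.isOpen_support).inter (isOpen_interior.prod isOpen_interior)).measure_pos _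
      ⟨(x, x), by simpa [F] using hg0.ne', hx, hx⟩
  have hsub : Function.support F ∩ interior K ×ˢ interior K ⊆ Function.support F ∩ K ×ˢ K :=
    inter_subset_inter_right _ (prod_mono interior_subset interior_subset)
  have hKK_top : volume (K ×ˢ K) ≠ ⊤ := (hKcomp.prod hKcomp).measure_lt_top.ne
  have hKK_pos : volume (K ×ˢ K) ≠ 0 :=
    (hpos.trans_le ((measure_mono hsub).trans (measure_mono inter_subset_right))).ne'
  rw [unifPair, integral_smul_measure, smul_eq_mul]
  refine mul_pos (ENNReal.toReal_pos (ENNReal.inv_ne_zero.2 hKK_top)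
    (ENNReal.inv_ne_top.2 hKK_pos)) ?_
  rw [setIntegral_pos_iff_support_of_nonneg_ae
    (ae_of_all _ fun p => hg_nonneg _ (norm_nonneg _))
    (hF.continuousOn.integrableOn_compact (hKcomp.prod hKcomp))]
  exact hpos.trans_le (measure_mono hsub)

lemma cond2ii_of_separable {K : Set (EuclideanSpace ℝ (Fin d))} (hKcomp : IsCompact K)
    (hKint : (interior K).Nonempty) {α : ℝ} (hα : 0 ≤ α) {m : ℕ} (hmα : (m : ℝ) * α < 1)
    {L : ℝ → ℝ} (hLmeas : Measurable L) (hLpos : ∀ t, 0 < t → 0 < L t)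
    (hLbdd : ∀ b, 0 < b → ∃ M, ∀ t ∈ Ioc (0 : ℝ) b, L t ≤ M)
    (hLslow : Tendsto (fun t => L (2 * t) / L t) atTop (𝓝 1))
    {CS : ℝ → ℝ} (hCScont : Continuous CS) (hCSnn : ∀ z, 0 ≤ z → 0 ≤ CS z) (hCS0 : CS 0 = 1)
    {C : ℝ → ℝ → ℝ} (hC : ∀ z τ, C z τ = CS z * (L τ / τ ^ α)) :
    Cond2ii C K m := by
  set I := ∫ p, CS ‖p.1 - p.2‖ ^ m ∂(unifPair K)
  have hI : 0 < I := integral_unifPair_pos hKcomp hKint (hCScont.pow m)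
    (fun z hz => pow_nonneg (hCSnn z hz) m) (by simp [hCS0])
  have hsep : ∀ τ, ∫ p, C ‖p.1 - p.2‖ τ ^ m ∂(unifPair K) = I * (L τ / τ ^ α) ^ m := by
    intro τ
    simp_rw [hC, mul_pow]
    exact integral_mul_const _ _
  have hmα₀ : 0 ≤ (m : ℝ) * α := by positivity
  refine ⟨(1 - m * α) / 2, ⟨by linarith, by linarith⟩, ?_⟩
  refine ((tendsto_rpow_neg_mul_integral_one_sub_div_mul_atTop (β := m * α)
    (δ := (1 - m * α) / 2) (by linarith) (by linarith)
    (integrableOn_Ioc_div_rpow_pow hLmeas hLpos hLbdd hmα)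
    (fun t ht => pow_pos (div_pos (hLpos t ht) (rpow_pos_of_pos ht α)) m)
    (tendsto_div_rpow_pow_ratio hLpos hLslow α m)).const_mul_atTop hI).congr fun T => ?_
  simp only [hsep, mul_left_comm _ I, intervalIntegral.integral_const_mul]

theorem cond2ii_separable_general
    (K : Set (EuclideanSpace ℝ (Fin d)))
    (hKcomp : IsCompact K) (hKint : (interior K).Nonempty)
    (α : ℝ) (hα : α ∈ Set.Ioo (0:ℝ) 1)
    (L : ℝ → ℝ) (hLmeas : Measurable L) (hLpos : ∀ t : ℝ, 0 < t → 0 < L t)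
    (hLlocbdd : ∀ b : ℝ, 0 < b → ∃ M : ℝ, ∀ t ∈ Set.Ioc (0:ℝ) b, L t ≤ M)
    (hLslow : ∀ lam : ℝ, 0 < lam →
      Tendsto (fun t : ℝ => L (lam * t) / L t) atTop (𝓝 1))
    (CS : ℝ → ℝ) (hCScont : Continuous CS) (hCSnn : ∀ z, 0 ≤ z → 0 ≤ CS z)
    (hCS0 : CS 0 = 1)
    (C : ℝ → ℝ → ℝ) (hC : ∀ z τ, C z τ = CS z * (L τ / τ ^ α)) :
    Cond2ii C K 1 ∧ (α < 1 / 2 → Cond2ii C K 2) := by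
  have hCond (m : ℕ) (hmα : (m : ℝ) * α < 1) : Cond2ii C K m :=
    cond2ii_of_separable hKcomp hKint hα.1.le hmα hLmeas hLpos hLlocbdd (hLslow 2 two_pos)
      hCScont hCSnn hCS0 hC
  exact ⟨hCond 1 (by simpa using hα.2), fun h => hCond 2 (by push_cast; linarith)⟩

/-- **LRD divergence condition for separable covariances**. If
`C(z,τ) = C_S(z) L(τ)/τ^α` with `α ∈ (0,1)`, `L` positive, measurable, locally bounded
and slowly varying at infinity, and `C_S` continuous, nonnegative with `C_S(0) = 1`, then
for any convex body `K`, Condition 2(ii) holds for `m = 1`, and also for `m = 2` whenever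
`α < 1/2`. -/
theorem cond2ii_separable
    (K : Set (EuclideanSpace ℝ (Fin d)))
    (hKcomp : IsCompact K) (hKconv : Convex ℝ K) (hKint : (interior K).Nonempty)
    (α : ℝ) (hα : α ∈ Set.Ioo (0:ℝ) 1)
    (L : ℝ → ℝ) (hLmeas : Measurable L) (hLpos : ∀ t : ℝ, 0 < t → 0 < L t)
    (hLlocbdd : ∀ b : ℝ, 0 < b → ∃ M : ℝ, ∀ t ∈ Set.Ioc (0:ℝ) b, L t ≤ M)
    (hLslow : ∀ lam : ℝ, 0 < lam →
      Tendsto (fun t : ℝ => L (lam * t) / L t) atTop (𝓝 1))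
    (CS : ℝ → ℝ) (hCScont : Continuous CS) (hCSnn : ∀ z, 0 ≤ z → 0 ≤ CS z)
    (hCS0 : CS 0 = 1)
    (C : ℝ → ℝ → ℝ) (hC : ∀ z τ, C z τ = CS z * (L τ / τ ^ α)) :
    Cond2ii C K 1 ∧ (α < 1 / 2 → Cond2ii C K 2) :=
  cond2ii_separable_general K hKcomp hKint α hα L hLmeas hLpos hLlocbdd hLslow CS hCScont hCSnn hCS0
    C hC
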